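/- arXiv:1707.03056 — 4 statements merged into one kernel-verified Lean document; each statement's English description precedes it below -/
import Mathlib

section
/- Let S = G × ℕ be equipped with the multiplication (g,n)·(h,m) = (g·φ^n(h), n+m). Then S is a monoid with identity (e,0) which is both left cancellative and right cancellative, and any two principal left ideals of S intersect: for all s, t ∈ S there exist s', t' ∈ S with s'·s = t'·t. Hence S = G ⋊_φ ℕ is an Ore (cancellative, right-reversible) semigroup. -/
/- The semigroup `S = G ⋊_φ ℕ`: underlying set `G × ℕ` with multiplication
   `(g,n)·(h,m) = (g·φ^n(h), n+m)`.  Here `φ : Monoid.End G` and `φ ^ n` is the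
   `n`-fold composite of `φ`. -/
def sMul {G : Type*} [Group G] (φ : Monoid.End G) (s t : G × ℕ) : G × ℕ :=
  (s.1 * (φ ^ s.2) t.1, s.2 + t.2)

/-- `S = G × ℕ` with `(g,n)·(h,m) = (g·φ^n(h), n+m)` is a monoid with
identity `(e,0)`, is left and right cancellative, and any two principal left ideals
intersect: for all `s, t ∈ S` there are `s', t'` with `s'·s = t'·t`.  Hence
`S = G ⋊_φ ℕ` is an Ore (cancellative, right-reversible) semigroup. -/
theorem sMul_monoid_cancellative_ore (G : Type*) [Group G] (φ : Monoid.End G)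
    (hinj : Function.Injective φ) :
    (∀ a b c : G × ℕ, sMul φ (sMul φ a b) c = sMul φ a (sMul φ b c)) ∧
    (∀ a : G × ℕ, sMul φ ((1 : G), (0 : ℕ)) a = a) ∧
    (∀ a : G × ℕ, sMul φ a ((1 : G), (0 : ℕ)) = a) ∧
    (∀ a b c : G × ℕ, sMul φ a b = sMul φ a c → b = c) ∧
    (∀ a b c : G × ℕ, sMul φ a c = sMul φ b c → a = b) ∧
    (∀ s t : G × ℕ, ∃ s' t' : G × ℕ, sMul φ s' s = sMul φ t' t) := by
  have hpinj : ∀ n : ℕ, Function.Injective (φ ^ n : Monoid.End G) := by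
    intro n
    induction n with
    | zero => simpa using Function.injective_id
    | succ k ih =>
      have : (φ ^ (k + 1) : Monoid.End G) = φ ^ k * φ := by rw [pow_succ]
      rw [this]
      exact ih.comp hinj
  refine ⟨?_, ?_, ?_, ?_, ?_, ?_⟩
  · intro a b c
    simp only [sMul, Prod.mk.injEq, map_mul, pow_add]
    exact ⟨by simp [mul_assoc], by ring⟩
  · intro a; simp [sMul]
  · intro a; simp [sMul]
  · intro a b c h
    simp only [sMul, Prod.mk.injEq] at h
    obtain ⟨h1, h2⟩ := h
    have h2' : b.2 = c.2 := by omega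
    have h1' : (φ ^ a.2) b.1 = (φ ^ a.2) c.1 := mul_left_cancel h1
    exact Prod.ext (hpinj a.2 h1') h2'
  · intro a b c h
    simp only [sMul, Prod.mk.injEq] at h
    obtain ⟨h1, h2⟩ := h
    have h2' : a.2 = b.2 := by omega
    rw [h2'] at h1
    exact Prod.ext (mul_right_cancel h1) h2'
  · intro s t
    refine ⟨((1 : G), t.2), ((φ ^ t.2) s.1 * ((φ ^ s.2) t.1)⁻¹, s.2), ?_⟩
    simp only [sMul, Prod.mk.injEq]
    constructor
    · group
    · omega
end

section
/- Let G be a group and φ : G → G an injective group homomorphism such that the set G/φ(G) of left cosets of φ(G) in G is finite. Then for every n ∈ ℕ the coset space G/φ^n(G) is finite, and its cardinality equals [G : φ(G)]^n, the n-th power of the number of left cosets of φ(G) in G. -/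
/-- `φ^n(G)` as a subgroup of `G`. -/
def rng {G : Type*} [Group G] (φ : Monoid.End G) (n : ℕ) : Subgroup G :=
  MonoidHom.range ((φ ^ n : Monoid.End G) : G →* G)

section

variable {G : Type*} [Group G] (φ : Monoid.End G)

lemma rng_zero : rng φ 0 = ⊤ :=
  MonoidHom.range_eq_top.mpr fun x => ⟨x, rfl⟩

lemma rng_one : rng φ 1 = (φ : G →* G).range := by
  rw [rng, pow_one]

lemma rng_succ (n : ℕ) : rng φ (n + 1) = (rng φ n).map (φ : G →* G) := by
  have hcomp : ((φ ^ (n + 1) : Monoid.End G) : G →* G) = (φ : G →* G).comp (φ ^ n) := by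
    rw [pow_succ']
    rfl
  rw [rng, rng, hcomp]
  exact MonoidHom.range_comp _ _

lemma index_rng {φ : Monoid.End G} (hinj : Function.Injective φ) (n : ℕ) :
    (rng φ n).index = (rng φ 1).index ^ n := by
  induction n with
  | zero => rw [rng_zero, Subgroup.index_top, pow_zero]
  | succ n ih => rw [rng_succ, Subgroup.index_map_of_injective _ hinj, ih, rng_one, pow_succ]

end

/-- **Statement 4.** If `φ : G → G` is an injective endomorphism with `G/φ(G)` finite,
then for every `n` the coset space `G/φ^n(G)` is finite, of cardinality
`[G : φ(G)]^n`. -/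
theorem card_quotient_pow_range (G : Type*) [Group G] (φ : Monoid.End G)
    (hinj : Function.Injective φ) (hfin : Finite (G ⧸ rng φ 1)) :
    ∀ n : ℕ, Finite (G ⧸ rng φ n) ∧
      Nat.card (G ⧸ rng φ n) = (Nat.card (G ⧸ rng φ 1)) ^ n := by
  intro n
  have hindex : (rng φ n).index = (rng φ 1).index ^ n := index_rng hinj n
  have : (rng φ n).FiniteIndex := ⟨hindex ▸ pow_ne_zero n Subgroup.index_ne_zero_of_finite⟩
  exact ⟨inferInstance, hindex⟩
end

section
/- For every g ∈ G and n ∈ ℕ, the operator U_g S^n (S^n)* (U_g)* ∈ B(ℓ²(G)) equals the orthogonal projection onto the closed subspace of functions in ℓ²(G) vanishing outside the coset g·φ^n(G); in particular its value depends only on the coset g·φ^n(G). Consequently, if g_1, …, g_k ∈ G form a complete set of representatives of the left cosets of φ^n(G) in G, then ∑_{j=1}^k U_{g_j} S^n (S^n)* (U_{g_j})* = 1. -/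
/-- `ℓ²(G)`. -/
noncomputable abbrev l2 (G : Type*) := lp (fun _ : G => ℂ) 2

/-- The orthonormal basis vector `ξ_h ∈ ℓ²(G)`. -/
noncomputable def xi (G : Type*) [DecidableEq G] (h : G) : l2 G := lp.single 2 h (1 : ℂ)

/-- The operator `P g n = U_g S^n (S^n)* (U_g)*`. -/
noncomputable def P {G : Type*} (U : G → (l2 G →L[ℂ] l2 G)) (S : l2 G →L[ℂ] l2 G)
    (g : G) (n : ℕ) : l2 G →L[ℂ] l2 G :=
  U g * S ^ n * star (S ^ n) * star (U g)

/-- The subspace of `ℓ²(G)` of functions vanishing outside the coset `g·φ^n(G)`. -/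
def V {G : Type*} [Group G] (φ : Monoid.End G) (g : G) (n : ℕ) : Set (l2 G) :=
  {f | ∀ x : G, g⁻¹ * x ∉ rng φ n → f x = 0}

/-!
`U_g S^n` sends `ξ_h` to `ξ_{g φⁿ(h)}`. An operator `A` moving the basis vectors along an injection
`σ` has adjoint `f ↦ f ∘ σ`, so `A A*` multiplies by the indicator function of the range of `σ`,
here the coset `g φⁿ(G)`. Everything follows from this formula; for the last claim, the cosets of
a complete set of representatives partition `G`, so their indicator functions sum to `1`.
-/

open scoped InnerProductSpace Pointwise

section Basis

variable {α : Type*} [DecidableEq α]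

lemma inner_xi_left (a : α) (f : l2 α) : ⟪xi α a, f⟫_ℂ = f a := by
  simp [xi, lp.inner_single_left]

lemma xi_apply (a b : α) : xi α a b = if b = a then 1 else 0 := by
  simp only [xi, lp.single_apply, Pi.single_apply]

lemma pow_apply_xi_of_apply_xi {A : l2 α →L[ℂ] l2 α} {σ : α → α}
    (hA : ∀ h, A (xi α h) = xi α (σ h)) (n : ℕ) (h : α) : (A ^ n) (xi α h) = xi α (σ^[n] h) := by
  induction n generalizing h with
  | zero => rfl
  | succ n ih => rw [pow_succ, mul_apply_eq_comp, hA, ih, Function.iterate_succ_apply]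

lemma star_apply_apply_of_apply_xi {A : l2 α →L[ℂ] l2 α} {σ : α → α}
    (hA : ∀ h, A (xi α h) = xi α (σ h)) (f : l2 α) (h : α) : star A f h = f (σ h) := by
  rw [← inner_xi_left, ContinuousLinearMap.star_eq_adjoint,
    ContinuousLinearMap.adjoint_inner_right, hA, inner_xi_left]

lemma mul_star_apply_apply_of_apply_xi {A : l2 α →L[ℂ] l2 α} {σ : α → α}
    (hσ : Function.Injective σ) (hA : ∀ h, A (xi α h) = xi α (σ h)) (f : l2 α) (x : α) :
    (A * star A) f x = (Set.range σ).indicator f x := by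
  have hstar := star_apply_apply_of_apply_xi hA
  rw [← inner_xi_left, mul_apply_eq_comp,
    ← ContinuousLinearMap.adjoint_inner_left, ← ContinuousLinearMap.star_eq_adjoint]
  by_cases hx : x ∈ Set.range σ
  · obtain ⟨z, rfl⟩ := hx
    have hxi : star A (xi α (σ z)) = xi α z :=
      lp.ext <| funext fun h => by simp only [hstar, xi_apply, hσ.eq_iff]
    rw [hxi, inner_xi_left, hstar, Set.indicator_of_mem (Set.mem_range_self z)]
  · have hxi : star A (xi α x) = 0 :=
      lp.ext <| funext fun h => by
        simp only [hstar, xi_apply, if_neg fun h' : σ h = x => hx ⟨h, h'⟩, lp.coeFn_zero,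
          Pi.zero_apply]
    rw [hxi, inner_zero_left, Set.indicator_of_notMem hx]

end Basis

lemma isClosed_setOf_forall_apply_eq_zero {α : Type*} (p : α → Prop) :
    IsClosed {f : l2 α | ∀ x, p x → f x = 0} := by
  simp only [Set.ofPred_forall]
  exact isClosed_iInter fun x => isClosed_iInter fun _ =>
    isClosed_eq (lp.evalCLM ℂ _ 2 x).continuous continuous_const

lemma sum_indicator_leftCoset_of_bijective {G M : Type*} [Group G] [AddCommMonoid M]
    {H : Subgroup G} {k : ℕ} {r : Fin k → G}
    (hr : Function.Bijective fun j => (r j : G ⧸ H)) (f : G → M) (x : G) :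
    ∑ j, (r j • (H : Set G)).indicator f x = f x := by
  classical
  obtain ⟨j₀, hj₀⟩ := hr.2 x
  have hmem : ∀ j, x ∈ r j • (H : Set G) ↔ j = j₀ := fun j => by
    rw [mem_leftCoset_iff, SetLike.mem_coe, ← QuotientGroup.eq, ← hj₀, hr.1.eq_iff]
  simp only [Set.indicator_apply, hmem, Finset.sum_ite_eq', Finset.mem_univ, if_true]

lemma P_eq_mul_star {G : Type*} (U : G → (l2 G →L[ℂ] l2 G)) (S : l2 G →L[ℂ] l2 G) (g : G)
    (n : ℕ) :
    P U S g n = U g * S ^ n * star (U g * S ^ n) := by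
  simp only [P, star_mul, mul_assoc]

lemma P_apply_apply {G : Type*} [Group G] [DecidableEq G] {φ : Monoid.End G}
    {U : G → (l2 G →L[ℂ] l2 G)} {S : l2 G →L[ℂ] l2 G} (hinj : Function.Injective φ)
    (hU : ∀ g h : G, U g (xi G h) = xi G (g * h)) (hS : ∀ h : G, S (xi G h) = xi G (φ h))
    (g : G) (n : ℕ) (f : l2 G) (x : G) :
    P U S g n f x = (g • (rng φ n : Set G)).indicator f x := by
  have hσ : Function.Injective fun h => g * (φ ^ n) h :=
    (mul_right_injective g).comp (by simpa only [Monoid.End.coe_pow] using hinj.iterate n)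
  have hA (h : G) : (U g * S ^ n) (xi G h) = xi G (g * (φ ^ n) h) := by
    rw [mul_apply_eq_comp, pow_apply_xi_of_apply_xi hS, hU, Monoid.End.coe_pow]
  rw [P_eq_mul_star, mul_star_apply_apply_of_apply_xi hσ hA, Set.range_mul]
  rfl

theorem P_is_orthogonal_projection_general (G : Type*) [Group G] [DecidableEq G]
    (φ : Monoid.End G) (hinj : Function.Injective φ)
    (U : G → (l2 G →L[ℂ] l2 G)) (S : l2 G →L[ℂ] l2 G)
    (hU : ∀ g h : G, U g (xi G h) = xi G (g * h))
    (hS : ∀ h : G, S (xi G h) = xi G (φ h)) :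
    (∀ (g : G) (n : ℕ), IsClosed (V φ g n)) ∧
    (∀ (g : G) (n : ℕ), star (P U S g n) = P U S g n) ∧
    (∀ (g : G) (n : ℕ) (f : l2 G), P U S g n f ∈ V φ g n) ∧
    (∀ (g : G) (n : ℕ) (f : l2 G), f ∈ V φ g n → P U S g n f = f) ∧
    (∀ (g g' : G) (n : ℕ), g⁻¹ * g' ∈ rng φ n → P U S g n = P U S g' n) ∧
    (∀ (n k : ℕ) (r : Fin k → G),
      Function.Bijective (fun j => (QuotientGroup.mk (r j) : G ⧸ rng φ n)) →
      ∑ j : Fin k, P U S (r j) n = 1) := by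
  have hP := P_apply_apply hinj hU hS
  refine ⟨fun g n => isClosed_setOf_forall_apply_eq_zero _, fun g n => ?_, fun g n f x hx => ?_,
    fun g n f hf => ?_, fun g g' n hgg' => ?_, fun n k r hr => ?_⟩
  · rw [P_eq_mul_star]
    exact IsSelfAdjoint.mul_star_self _
  · rw [hP, Set.indicator_of_notMem (mt (mem_leftCoset_iff g).1 hx)]
  · exact lp.ext <| funext fun x => by
      rw [hP, Set.indicator_apply_eq_self]
      exact fun hx => hf x (mt (mem_leftCoset_iff g).2 hx)
  · have hcoset : g • (rng φ n : Set G) = g' • (rng φ n : Set G) :=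
      (leftCoset_eq_iff _).2 hgg'
    ext f : 1
    exact lp.ext <| funext fun x => by rw [hP, hP, hcoset]
  · ext f : 1
    refine lp.ext <| funext fun x => ?_
    rw [sum_apply, lp.coeFn_sum, Finset.sum_apply]
    simp only [hP]
    exact sum_indicator_leftCoset_of_bijective hr f x

/-- **Statement 6.** For every `g ∈ G` and `n ∈ ℕ`, `U_g S^n (S^n)* (U_g)*` is the
orthogonal projection onto the closed subspace of functions vanishing outside the coset
`g·φ^n(G)` (it is self-adjoint, it maps into that subspace and fixes it pointwise); in
particular it only depends on the coset `g·φ^n(G)`.  Consequently, if `g_1, …, g_k` is a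
complete set of representatives of the left cosets of `φ^n(G)`, then
`∑ⱼ U_{gⱼ} S^n (S^n)* (U_{gⱼ})* = 1`. -/
theorem P_is_orthogonal_projection (G : Type*) [Group G] [DecidableEq G]
    (φ : Monoid.End G) (hinj : Function.Injective φ) (hfin : Finite (G ⧸ rng φ 1))
    (U : G → (l2 G →L[ℂ] l2 G)) (S : l2 G →L[ℂ] l2 G)
    (hU : ∀ g h : G, U g (xi G h) = xi G (g * h))
    (hS : ∀ h : G, S (xi G h) = xi G (φ h)) :
    (∀ (g : G) (n : ℕ), IsClosed (V φ g n)) ∧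
    (∀ (g : G) (n : ℕ), star (P U S g n) = P U S g n) ∧
    (∀ (g : G) (n : ℕ) (f : l2 G), P U S g n f ∈ V φ g n) ∧
    (∀ (g : G) (n : ℕ) (f : l2 G), f ∈ V φ g n → P U S g n f = f) ∧
    (∀ (g g' : G) (n : ℕ), g⁻¹ * g' ∈ rng φ n → P U S g n = P U S g' n) ∧
    (∀ (n k : ℕ) (r : Fin k → G),
      Function.Bijective (fun j => (QuotientGroup.mk (r j) : G ⧸ rng φ n)) →
      ∑ j : Fin k, P U S (r j) n = 1) :=
  P_is_orthogonal_projection_general G φ hinj U S hU hS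
end

section
/- For all g ∈ G and l, m ∈ ℕ, if h_1, …, h_k ∈ G form a complete set of representatives of the left cosets of φ^l(G) in G, then in B(ℓ²(G)) one has the refinement identity U_g S^m (S^m)* (U_g)* = ∑_{j=1}^k U_{g·φ^m(h_j)} S^{l+m} (S^{l+m})* (U_{g·φ^m(h_j)})*. -/
/-!
`P U S g n` is the orthogonal projection of `ℓ²(G)` onto the span of the basis vectors `ξ_h` with
`h ∈ g φⁿ(G)`: it fixes these and kills all others. The refinement identity is therefore the
partition of the coset `g φᵐ(G)` into the cosets `g φᵐ(hⱼ) φˡ⁺ᵐ(G)`, which is the image under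
`x ↦ g φᵐ(x)` of the partition of `G` into the cosets `hⱼ φˡ(G)`; injectivity of `φᵐ` makes
the images disjoint.
-/

open Classical in
theorem Subgroup.sum_ite_mul_apply_inv_mul_mem_map {G G' ι M : Type*} [Group G] [Group G']
    [Fintype ι] [AddCommMonoid M] {ψ : G →* G'} (hψ : Function.Injective ψ) {K : Subgroup G}
    {r : ι → G} (hr : Function.Bijective fun j => (r j : G ⧸ K)) (g x : G') (v : M) :
    ∑ j, (if (g * ψ (r j))⁻¹ * x ∈ K.map ψ then v else 0) =
      if g⁻¹ * x ∈ ψ.range then v else 0 := by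
  simp only [mul_inv_rev, mul_assoc]
  split_ifs with hx
  · obtain ⟨y, hy⟩ := hx
    obtain ⟨j₀, hj₀⟩ := hr.surjective y
    have key : ∀ j, (ψ (r j))⁻¹ * (g⁻¹ * x) ∈ K.map ψ ↔ j = j₀ := fun j => by
      rw [← hy, ← map_inv, ← map_mul, K.mem_map_iff_mem hψ, ← QuotientGroup.eq, ← hj₀,
        hr.injective.eq_iff]
    simp only [key, Finset.sum_ite_eq', Finset.mem_univ, if_true]
  · refine Finset.sum_eq_zero fun j _ => if_neg fun hmem => hx ?_
    simpa using mul_mem (ψ.mem_range.2 ⟨r j, rfl⟩) (K.map_le_range ψ hmem)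

section group
variable {G : Type*} [Group G]

theorem rng_add (φ : Monoid.End G) (l m : ℕ) :
    rng φ (l + m) = (rng φ l).map ((φ ^ m : Monoid.End G) : G →* G) := by
  rw [rng, rng, add_comm, pow_add]
  exact (MonoidHom.map_range _ _).symm

theorem mem_rng_iff {φ : Monoid.End G} {n : ℕ} {x : G} : x ∈ rng φ n ↔ ∃ a, φ^[n] a = x :=
  Iff.rfl

end group

section basis

variable {ι : Type*} [DecidableEq ι]

theorem inner_xi_left_s7 (i : ι) (v : l2 ι) : inner ℂ (xi ι i) v = v i := by
  simp [xi, lp.inner_single_left]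

theorem xi_apply_s7 (i j : ι) : xi ι i j = if j = i then 1 else 0 := by
  simp [xi, lp.single_apply, Pi.single_apply]

theorem continuousLinearMap_ext_xi {F : Type*} [AddCommMonoid F] [Module ℂ F]
    [TopologicalSpace F] [T2Space F] {A B : l2 ι →L[ℂ] F}
    (h : ∀ i, A (xi ι i) = B (xi ι i)) : A = B :=
  lp.ext_continuousLinearMap ENNReal.ofNat_ne_top fun i =>
    ContinuousLinearMap.ext_ring (by simpa [xi] using h i)

end basis

section adjoint

variable {α β : Type*} [DecidableEq α] [DecidableEq β] {T : l2 α →L[ℂ] l2 β} {f : α → β}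

theorem adjoint_apply_xi_apply (hT : ∀ a, T (xi α a) = xi β (f a)) (b : β) (a : α) :
    T.adjoint (xi β b) a = if f a = b then 1 else 0 := by
  rw [← inner_xi_left_s7, ContinuousLinearMap.adjoint_inner_right, hT, inner_xi_left_s7, xi_apply_s7]

theorem adjoint_apply_xi_of_injective (hT : ∀ a, T (xi α a) = xi β (f a))
    (hf : Function.Injective f) (a : α) : T.adjoint (xi β (f a)) = xi α a := by
  ext i
  simp only [adjoint_apply_xi_apply hT, xi_apply_s7, hf.eq_iff]

theorem adjoint_apply_xi_of_notMem_range (hT : ∀ a, T (xi α a) = xi β (f a)) {b : β}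
    (hb : b ∉ Set.range f) : T.adjoint (xi β b) = 0 := by
  ext i
  rw [adjoint_apply_xi_apply hT, if_neg fun h => hb ⟨i, h⟩]
  rfl

end adjoint

theorem pow_apply_xi {α : Type*} [DecidableEq α] {T : l2 α →L[ℂ] l2 α} {f : α → α}
    (hT : ∀ a, T (xi α a) = xi α (f a)) (n : ℕ) (a : α) : (T ^ n) (xi α a) = xi α (f^[n] a) := by
  induction n generalizing a with
  | zero => rfl
  | succ n ih => rw [pow_succ, mul_apply_eq_comp, hT, ih, Function.iterate_succ_apply]

open Classical in
theorem P_apply_xi {G : Type*} [Group G] [DecidableEq G] {φ : Monoid.End G}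
    (hinj : Function.Injective φ) {U : G → (l2 G →L[ℂ] l2 G)} {S : l2 G →L[ℂ] l2 G}
    (hU : ∀ g h : G, U g (xi G h) = xi G (g * h)) (hS : ∀ h : G, S (xi G h) = xi G (φ h))
    (g : G) (n : ℕ) (h : G) :
    P U S g n (xi G h) = if g⁻¹ * h ∈ rng φ n then xi G h else 0 := by
  have hSn := pow_apply_xi hS n
  have hUg : (U g).adjoint (xi G h) = xi G (g⁻¹ * h) := by
    conv_lhs => rw [← mul_inv_cancel_left g h]
    exact adjoint_apply_xi_of_injective (hU g) (mul_right_injective g) _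
  simp only [P, mul_apply_eq_comp, ContinuousLinearMap.star_eq_adjoint, hUg]
  split_ifs with hmem
  · obtain ⟨a, ha⟩ := mem_rng_iff.1 hmem
    rw [← ha, adjoint_apply_xi_of_injective hSn (hinj.iterate n), hSn, ha, hU,
      mul_inv_cancel_left]
  · rw [adjoint_apply_xi_of_notMem_range hSn fun ha => hmem (mem_rng_iff.2 ha), map_zero,
      map_zero]

theorem P_refinement_general (G : Type*) [Group G] [DecidableEq G]
    (φ : Monoid.End G) (hinj : Function.Injective φ)
    (U : G → (l2 G →L[ℂ] l2 G)) (S : l2 G →L[ℂ] l2 G)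
    (hU : ∀ g h : G, U g (xi G h) = xi G (g * h))
    (hS : ∀ h : G, S (xi G h) = xi G (φ h)) :
    ∀ (g : G) (l m k : ℕ) (r : Fin k → G),
      Function.Bijective (fun j => (QuotientGroup.mk (r j) : G ⧸ rng φ l)) →
      P U S g m = ∑ j : Fin k, P U S (g * (φ ^ m) (r j)) (l + m) := by
  classical
  intro g l m k r hr
  refine continuousLinearMap_ext_xi fun h => ?_
  simp only [sum_apply, P_apply_xi hinj hU hS, rng_add]
  exact (Subgroup.sum_ite_mul_apply_inv_mul_mem_map (ψ := φ ^ m) (hinj.iterate m) hr _ _ _).symm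

/-- **Statement 8.** For all `g ∈ G` and `l, m ∈ ℕ`, if `h_1, …, h_k` is a complete set
of representatives of the left cosets of `φ^l(G)` in `G`, then
`U_g S^m (S^m)* (U_g)* = ∑ⱼ U_{g·φ^m(hⱼ)} S^{l+m} (S^{l+m})* (U_{g·φ^m(hⱼ)})*`. -/
theorem P_refinement (G : Type*) [Group G] [DecidableEq G]
    (φ : Monoid.End G) (hinj : Function.Injective φ) (hfin : Finite (G ⧸ rng φ 1))
    (U : G → (l2 G →L[ℂ] l2 G)) (S : l2 G →L[ℂ] l2 G)
    (hU : ∀ g h : G, U g (xi G h) = xi G (g * h))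
    (hS : ∀ h : G, S (xi G h) = xi G (φ h)) :
    ∀ (g : G) (l m k : ℕ) (r : Fin k → G),
      Function.Bijective (fun j => (QuotientGroup.mk (r j) : G ⧸ rng φ l)) →
      P U S g m = ∑ j : Fin k, P U S (g * (φ ^ m) (r j)) (l + m) :=
  P_refinement_general G φ hinj U S hU hS
end
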